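/- Let n and k be integers with 0 < k ≤ n(n−1)/2, let j = min{s : s(s−1)/2 ≥ k}, and let a = a_1 a_2 … a_n be the subexcedant sequence with a_i = i−1 for 1 ≤ i ≤ j−1, a_j = k − (j−1)(j−2)/2, and a_i = 0 for i > j (this is the smallest sequence in S(k,n) in co-lex order). Let α = ψ(a) ∈ S_n be the permutation with McMahon code a. Then α(i) = j − a_j − i if 1 ≤ i ≤ j − (a_j + 1), α(i) = 2j − a_j − i if j − (a_j + 1) < i ≤ j, and α(i) = i if i > j. -/

import Mathlib

/-- `rot u k` is the permutation `[[u,k]]` of `{1,…,u} ⊆ ℕ` obtained by `k`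
right circular shifts of the first `u` entries of the identity (positions are
1-based; all other natural numbers are fixed): `[[u,k]] i = u - k + i` for
`1 ≤ i ≤ k`, `[[u,k]] i = i - k` for `k < i ≤ u` and `[[u,k]] i = i` for `i > u`.
It is (junk-)defined as the identity when `¬ k < u`. -/
def rot (u k : ℕ) : Equiv.Perm ℕ :=
  if _h : k < u then
    { toFun := fun i =>
        if 1 ≤ i ∧ i ≤ k then u - k + i
        else if k < i ∧ i ≤ u then i - k
        else i
      invFun := fun j =>
        if u - k + 1 ≤ j ∧ j ≤ u then j - (u - k)
        else if 1 ≤ j ∧ j ≤ u - k then j + k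
        else j
      left_inv := by intro i; dsimp only; split_ifs <;> omega
      right_inv := by intro j; dsimp only; split_ifs <;> omega }
  else 1

/-- `psi n t = [[n, t n]] · [[n-1, t (n-1)]] · ⋯ · [[2, t 2]] · [[1, t 1]]`, where
permutations act on indices, i.e. `(σ * τ) i = σ (τ i)`.  When `t` is a subexcedant
sequence of length `n`, `t` is called the McMahon code of the permutation `psi n t`. -/
def psi (n : ℕ) (t : ℕ → ℕ) : Equiv.Perm ℕ :=
  ((List.range n).reverse.map (fun i => rot (i + 1) (t (i + 1)))).prod

/-- `c` is a subexcedant sequence of length `n`: `0 ≤ c i ≤ i - 1` for `1 ≤ i ≤ n`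
(positions are 1-based). -/
def Subexcedant (n : ℕ) (c : ℕ → ℕ) : Prop :=
  ∀ i, 1 ≤ i → i ≤ n → c i ≤ i - 1

/-- The major index of a permutation of `{1,…,n}`:
`maj π = ∑_{1 ≤ i < n, π i > π (i+1)} i`. -/
def maj (n : ℕ) (π : Equiv.Perm ℕ) : ℕ :=
  ∑ i ∈ Finset.Ico 1 n, if π (i + 1) < π i then i else 0

/-!
The code `a` is `0 1 2 ⋯ (j-2) q 0 0 ⋯` with `q = a j`. The first `j - 1` factors of `ψ(a)`
compose to the reversal `i ↦ j - i` of `{1, …, j-1}`, the factors beyond `j` are identities,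
so `ψ(a) = [[j, q]] · reversal`, which is evaluated directly. Minimality of `j` gives
`(j-1)(j-2)/2 < k ≤ j(j-1)/2`, i.e. `1 ≤ q ≤ j - 1`.
-/

lemma rot_apply {u k : ℕ} (h : k < u) (i : ℕ) :
    rot u k i = if 1 ≤ i ∧ i ≤ k then u - k + i
      else if k < i ∧ i ≤ u then i - k else i := by
  simp only [rot, dif_pos h]
  rfl

lemma rot_zero (u : ℕ) : rot u 0 = 1 := by
  rcases Nat.eq_zero_or_pos u with hu | hu
  · simp [rot, hu]
  · ext i
    rw [rot_apply hu]
    simp only [Equiv.Perm.coe_one, id]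
    split_ifs <;> omega

lemma psi_zero (t : ℕ → ℕ) : psi 0 t = 1 := by
  simp [psi]

lemma psi_succ (m : ℕ) (t : ℕ → ℕ) :
    psi (m + 1) t = rot (m + 1) (t (m + 1)) * psi m t := by
  simp [psi, List.range_succ]

lemma psi_eq_of_forall_eq_zero {m n : ℕ} {t : ℕ → ℕ} (hmn : m ≤ n)
    (ht : ∀ i, m < i → i ≤ n → t i = 0) : psi n t = psi m t := by
  induction n, hmn using Nat.le_induction with
  | base => rfl
  | succ n hmn ih =>
    rw [psi_succ, ht (n + 1) (by omega) le_rfl, rot_zero, one_mul,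
      ih fun i hi hin => ht i hi (by omega)]

lemma psi_apply_of_forall_eq_pred {m : ℕ} {t : ℕ → ℕ}
    (ht : ∀ i, 1 ≤ i → i ≤ m → t i = i - 1) (i : ℕ) :
    psi m t i = if 1 ≤ i ∧ i ≤ m then m + 1 - i else i := by
  induction m generalizing i with
  | zero =>
    rw [psi_zero]
    simp only [Equiv.Perm.coe_one, id]
    split_ifs <;> omega
  | succ m ih =>
    rw [psi_succ, Equiv.Perm.mul_apply, ih (fun i hi him => ht i hi (by omega)),
      ht (m + 1) (by omega) le_rfl, Nat.add_sub_cancel]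
    rcases Nat.eq_zero_or_pos m with rfl | hm
    · rw [rot_zero]
      simp only [Equiv.Perm.coe_one, id]
      split_ifs <;> omega
    · rw [rot_apply (by omega)]
      split_ifs <;> omega

lemma sInf_triangle_bounds {n k j : ℕ} (hk0 : 0 < k) (hkn : k ≤ n * (n - 1) / 2)
    (hj : j = sInf {s : ℕ | k ≤ s * (s - 1) / 2}) :
    j ≤ n ∧ (j - 1) * (j - 2) / 2 < k ∧ k ≤ (j - 1) * (j - 2) / 2 + (j - 1) := by
  have hjn : j ≤ n := hj ▸ Nat.sInf_le hkn
  have hjk : k ≤ j * (j - 1) / 2 := by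
    rw [hj]
    exact Nat.sInf_mem (s := {s : ℕ | k ≤ s * (s - 1) / 2}) ⟨n, hkn⟩
  obtain ⟨m, rfl⟩ : ∃ m, j = m + 1 := Nat.exists_eq_succ_of_ne_zero (by rintro rfl; omega)
  have hmk : ¬ k ≤ m * (m - 1) / 2 := fun h => by
    have := hj ▸ Nat.sInf_le (show m ∈ {s : ℕ | k ≤ s * (s - 1) / 2} from h)
    omega
  rw [Nat.triangle_succ] at hjk
  rw [Nat.add_sub_cancel, show m + 1 - 2 = m - 1 by omega]
  omega

/-- for `0 < k ≤ n(n-1)/2`, let `j = min {s : s(s-1)/2 ≥ k}` and let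
`a` be the smallest (in co-lex order) subexcedant sequence in `S(k,n)`, i.e.
`a i = i - 1` for `1 ≤ i ≤ j-1`, `a j = k - (j-1)(j-2)/2` and `a i = 0` for `i > j`.
Then the permutation `α = ψ(a)` with McMahon code `a` satisfies
`α i = j - a j - i` for `1 ≤ i ≤ j - (a j + 1)`, `α i = 2j - a j - i` for
`j - (a j + 1) < i ≤ j`, and `α i = i` for `i > j`. -/
theorem psi_of_colex_smallest (n k j : ℕ) (a : ℕ → ℕ)
    (hk0 : 0 < k) (hkn : k ≤ n * (n - 1) / 2)
    (hj : j = sInf {s : ℕ | k ≤ s * (s - 1) / 2})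
    (ha1 : ∀ i, 1 ≤ i → i ≤ j - 1 → a i = i - 1)
    (ha2 : a j = k - (j - 1) * (j - 2) / 2)
    (ha3 : ∀ i, j < i → a i = 0) :
    ∀ i, (1 ≤ i → i ≤ j - (a j + 1) → (psi n a) i = j - a j - i) ∧
      (j - (a j + 1) < i → i ≤ j → (psi n a) i = 2 * j - a j - i) ∧
      (j < i → (psi n a) i = i) := by
  obtain ⟨hjn, hk_gt, hk_le⟩ := sInf_triangle_bounds hk0 hkn hj
  have hq : 1 ≤ a j ∧ a j < j := by omega
  have hpsi : ∀ i, psi n a i = rot j (a j) (if 1 ≤ i ∧ i ≤ j - 1 then j - i else i) := by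
    intro i
    obtain ⟨m, rfl⟩ : ∃ m, j = m + 1 := ⟨j - 1, by omega⟩
    simp only [Nat.add_sub_cancel] at ha1 ⊢
    rw [psi_eq_of_forall_eq_zero hjn fun i hi _ => ha3 i hi, psi_succ, Equiv.Perm.mul_apply,
      psi_apply_of_forall_eq_pred ha1]
  intro i
  refine ⟨fun _ _ => ?_, fun _ _ => ?_, fun _ => ?_⟩ <;>
  · rw [hpsi, rot_apply hq.2]
    split_ifs <;> omega
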